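/- Let w : ℝ → ℝ³ be twice differentiable with w(t) ≠ 0, dw/dt = a, d²w/dt² = b. Define α_a = (ŵ·a)/|w|, χ_a = (ŵ×a)/|w|, α_b = (ŵ·b)/|w|, χ_b = (ŵ×b)/|w|, and the quaternions 𝔮_a = [α_a, χ_a], 𝔮_b = [α_b, χ_b]. Then (d𝔮_a/dt + 𝔮_a⊛𝔮_a − 𝔮_b)⊛[0,w] = 0. -/

import Mathlib

/-!
Read `[p, q]` as the quaternion `p + q` and a vector `v` as the pure quaternion `[0, v]`. Since
`[0, w]⁻¹ = [0, -w] / |w|²`, the pair `𝔮_v = [(ŵ·v)/|w|, (ŵ×v)/|w|]` is the quaternion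
`v w⁻¹`. Hence `𝔮_a = w' w⁻¹` is the right logarithmic derivative of `w`, and differentiating
`w⁻¹` (`(w⁻¹)' = -w⁻¹ w' w⁻¹`) gives the Riccati equation `𝔮_a' = 𝔮_b - 𝔮_a²`: the bracket
vanishes already before it is multiplied by `[0, w]`.
-/

open Matrix Quaternion

/-- The quaternion product in scalar-vector form. -/
noncomputable def qmul (a b : ℝ × (Fin 3 → ℝ)) : ℝ × (Fin 3 → ℝ) :=
  (a.1 * b.1 - a.2 ⬝ᵥ b.2, a.1 • b.2 + b.1 • a.2 + a.2 ⨯₃ b.2)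

/-- The Euclidean norm of a vector in `ℝ³`. -/
noncomputable def norm3 (v : Fin 3 → ℝ) : ℝ := Real.sqrt (v ⬝ᵥ v)

section

variable {𝕜 F G : Type*} [NontriviallyNormedField 𝕜] [NormedAddCommGroup F] [NormedSpace 𝕜 F]
  [NormedAddCommGroup G] [NormedSpace 𝕜 G] {f : 𝕜 → F × G} {f' : F × G} {x : 𝕜}

theorem HasDerivAt.fst (h : HasDerivAt f f' x) : HasDerivAt (fun y => (f y).1) f'.1 x :=
  (ContinuousLinearMap.fst 𝕜 F G).hasFDerivAt.comp_hasDerivAt x h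

theorem HasDerivAt.snd (h : HasDerivAt f f' x) : HasDerivAt (fun y => (f y).2) f'.2 x :=
  (ContinuousLinearMap.snd 𝕜 F G).hasFDerivAt.comp_hasDerivAt x h

end

section

variable {𝕜 R : Type*} [NontriviallyNormedField 𝕜] [NormedDivisionRing R] [NormedAlgebra 𝕜 R]
  {x : 𝕜}

theorem HasDerivAt.inv' {c : 𝕜 → R} {c' : R} (hc : HasDerivAt c c' x) (hx : c x ≠ 0) :
    HasDerivAt (fun y => (c y)⁻¹) (-((c x)⁻¹ * c' * (c x)⁻¹)) x := by
  have h := (hasFDerivAt_inv' (𝕜 := 𝕜) hx).comp_hasDerivAt x hc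
  simp only [_root_.neg_apply, ContinuousLinearMap.mulLeftRight_apply] at h
  exact h

theorem HasDerivAt.mul_inv_riccati {w a : 𝕜 → R} {b : R} (hw : HasDerivAt w (a x) x)
    (ha : HasDerivAt a b x) (hx : w x ≠ 0) :
    HasDerivAt (fun y => a y * (w y)⁻¹) (b * (w x)⁻¹ - (a x * (w x)⁻¹) ^ 2) x := by
  convert ha.fun_mul (hw.inv' hx) using 1
  noncomm_ring

end

noncomputable def toQuat : (ℝ × (Fin 3 → ℝ)) ≃L[ℝ] ℍ[ℝ] :=
  LinearEquiv.toContinuousLinearEquiv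
    { toFun := fun p => ⟨p.1, p.2 0, p.2 1, p.2 2⟩
      invFun := fun q => (q.re, ![q.imI, q.imJ, q.imK])
      map_add' := fun _ _ => rfl
      map_smul' := fun _ _ => rfl
      left_inv := fun p => by
        ext i
        · rfl
        · fin_cases i <;> rfl
      right_inv := fun _ => rfl }

section

variable (p : ℝ × (Fin 3 → ℝ))

@[simp] theorem re_toQuat : (toQuat p).re = p.1 := rfl
@[simp] theorem imI_toQuat : (toQuat p).imI = p.2 0 := rfl
@[simp] theorem imJ_toQuat : (toQuat p).imJ = p.2 1 := rfl
@[simp] theorem imK_toQuat : (toQuat p).imK = p.2 2 := rfl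

end

theorem toQuat_qmul (p q : ℝ × (Fin 3 → ℝ)) : toQuat (qmul p q) = toQuat p * toQuat q := by
  ext <;> simp [qmul, cross_apply, dotProduct, Fin.sum_univ_three, Quaternion.re_mul,
    Quaternion.imI_mul, Quaternion.imJ_mul, Quaternion.imK_mul, vecHead, vecTail] <;> ring

theorem HasDerivAt.toQuat_vector {f : ℝ → Fin 3 → ℝ} {f' : Fin 3 → ℝ} {t : ℝ}
    (h : HasDerivAt f f' t) : HasDerivAt (fun u => toQuat (0, f u)) (toQuat (0, f')) t :=
  toQuat.hasFDerivAt.comp_hasDerivAt t ((hasDerivAt_const t 0).prodMk h)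

theorem norm3_mul_self (v : Fin 3 → ℝ) : norm3 v * norm3 v = v ⬝ᵥ v :=
  Real.mul_self_sqrt (Finset.sum_nonneg fun i _ => mul_self_nonneg (v i))

theorem normSq_toQuat_vector (w : Fin 3 → ℝ) : normSq (toQuat (0, w)) = norm3 w ^ 2 := by
  rw [Quaternion.normSq_def', sq (norm3 w), norm3_mul_self]
  simp only [re_toQuat, imI_toQuat, imJ_toQuat, imK_toQuat, dotProduct, Fin.sum_univ_three]
  ring

/-- The paper's `𝔮_v = [α_v, χ_v]` for the curve point `w` and the vector `v`. -/
noncomputable def alignQuat (w v : Fin 3 → ℝ) : ℝ × (Fin 3 → ℝ) :=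
  let what := (norm3 w)⁻¹ • w
  ((what ⬝ᵥ v) / norm3 w, (norm3 w)⁻¹ • (what ⨯₃ v))

theorem toQuat_alignQuat (w v : Fin 3 → ℝ) :
    toQuat (alignQuat w v) = toQuat (0, v) * (toQuat (0, w))⁻¹ := by
  rw [Quaternion.inv_def, normSq_toQuat_vector]
  ext <;> simp [alignQuat, Quaternion.re_mul, Quaternion.imI_mul, Quaternion.imJ_mul,
    Quaternion.imK_mul, cross_apply, dotProduct, Fin.sum_univ_three] <;> ring

theorem hasDerivAt_alignQuat {w a : ℝ → Fin 3 → ℝ} {b : Fin 3 → ℝ} {t : ℝ}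
    (hw : HasDerivAt w (a t) t) (ha : HasDerivAt a b t) (hne : w t ≠ 0) :
    HasDerivAt (fun u => alignQuat (w u) (a u))
      (alignQuat (w t) b - qmul (alignQuat (w t) (a t)) (alignQuat (w t) (a t))) t := by
  have hW : toQuat (0, w t) ≠ 0 := by simpa using hne
  have hQ := toQuat.symm.hasFDerivAt.comp_hasDerivAt t
    (hw.toQuat_vector.mul_inv_riccati ha.toQuat_vector hW)
  simp only [Function.comp_def, ← toQuat_alignQuat, ContinuousLinearEquiv.symm_apply_apply] at hQ
  refine hQ.congr_deriv ?_
  rw [sq, ← toQuat_qmul, ← map_sub]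
  exact toQuat.symm_apply_apply _

/-- For a twice differentiable nonvanishing curve `w` with `dw/dt = a`, `d²w/dt² = b`,
and quaternions `𝔮_a = [α_a,χ_a]`, `𝔮_b = [α_b,χ_b]` built from the alignment
decompositions of `a` and `b`, one has `(d𝔮_a/dt + 𝔮_a⊛𝔮_a − 𝔮_b)⊛[0,w] = 0`. -/
theorem riccati_times_w (w a b : ℝ → Fin 3 → ℝ)
    (hne : ∀ t, w t ≠ 0)
    (ha : ∀ t, HasDerivAt w (a t) t)
    (hb : ∀ t, HasDerivAt a (b t) t) :
    let what : ℝ → Fin 3 → ℝ := fun t => (norm3 (w t))⁻¹ • w t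
    let αa : ℝ → ℝ := fun t => (what t ⬝ᵥ a t) / norm3 (w t)
    let χa : ℝ → Fin 3 → ℝ := fun t => (norm3 (w t))⁻¹ • (what t ⨯₃ a t)
    let αb : ℝ → ℝ := fun t => (what t ⬝ᵥ b t) / norm3 (w t)
    let χb : ℝ → Fin 3 → ℝ := fun t => (norm3 (w t))⁻¹ • (what t ⨯₃ b t)
    ∀ t : ℝ,
      qmul (deriv αa t + (qmul (αa t, χa t) (αa t, χa t)).1 - αb t,
            deriv χa t + (qmul (αa t, χa t) (αa t, χa t)).2 - χb t)
        ((0 : ℝ), w t) = (0, 0) := by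
  intro what αa χa αb χb t
  have hq := hasDerivAt_alignQuat (ha t) (hb t) (hne t)
  have hα : deriv αa t = _ := hq.fst.deriv
  have hχ : deriv χa t = _ := hq.snd.deriv
  rw [hα, hχ]
  change qmul (_ + qmul (alignQuat (w t) (a t)) (alignQuat (w t) (a t))
    - alignQuat (w t) (b t)) (0, w t) = 0
  rw [sub_add_cancel, sub_self]
  simp [qmul]
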